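/- arXiv:0810.1980 — 2 statements merged into one kernel-verified Lean document; each statement's English description precedes it below -/
import Mathlib

section
/- Fix ρ, λ ∈ [0,1], R2 ∈ ℝ, and pmfs Q1 on 𝒳1 and Q2 on 𝒳2. Let D(Q1,Q2) be the set of pairs (P,P') of joint pmfs on 𝒳1×𝒳2×𝒴1 with P_{X̂1} = P_{X̂1'} = Q1 and P_{X̂2} = P_{X̂2'} = Q2. Then the function (P,P') ↦ f2(ρ,λ,P,P') is convex on D(Q1,Q2): for all (P,P'), (P̃,P̃') ∈ D(Q1,Q2) and all t ∈ [0,1], f2(ρ,λ, t·P+(1−t)·P̃, t·P'+(1−t)·P̃') ≤ t·f2(ρ,λ,P,P') + (1−t)·f2(ρ,λ,P̃,P̃'). -/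
open Finset

section InfoDefs

variable {Ω : Type*} [Fintype Ω]

/-- A probability mass function on a finite type. -/
def IsPMF {α : Type*} [Fintype α] (p : α → ℝ) : Prop :=
  (∀ a, 0 ≤ p a) ∧ ∑ a, p a = 1

/-- Pushforward of `P` along `f` (the pmf of the random variable `f`). -/
noncomputable def pushf {α : Type*} [Fintype α] [DecidableEq α]
    (P : Ω → ℝ) (f : Ω → α) (a : α) : ℝ :=
  ∑ ω, if f ω = a then P ω else 0

/-- Entropy of the random variable `f` under `P`. -/
noncomputable def entH {α : Type*} [Fintype α] [DecidableEq α]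
    (P : Ω → ℝ) (f : Ω → α) : ℝ :=
  -∑ a, pushf P f a * Real.log (pushf P f a)

/-- Conditional entropy `H(g | f)` under `P`. -/
noncomputable def condEnt {α β : Type*} [Fintype α] [DecidableEq α] [Fintype β] [DecidableEq β]
    (P : Ω → ℝ) (f : Ω → α) (g : Ω → β) : ℝ :=
  -∑ a, ∑ b, pushf P (fun ω => (f ω, g ω)) (a, b) *
      Real.log (pushf P (fun ω => (f ω, g ω)) (a, b) / pushf P f a)

/-- Mutual information `I(f;g)` under `P`. -/
noncomputable def mutI {α β : Type*} [Fintype α] [DecidableEq α] [Fintype β] [DecidableEq β]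
    (P : Ω → ℝ) (f : Ω → α) (g : Ω → β) : ℝ :=
  ∑ a, ∑ b, pushf P (fun ω => (f ω, g ω)) (a, b) *
      Real.log (pushf P (fun ω => (f ω, g ω)) (a, b) / (pushf P f a * pushf P g b))

/-- Conditional mutual information `I(f;g|h)` under `P`. -/
noncomputable def condMutI {α β γ : Type*} [Fintype α] [DecidableEq α] [Fintype β]
    [DecidableEq β] [Fintype γ] [DecidableEq γ]
    (P : Ω → ℝ) (f : Ω → α) (g : Ω → β) (h : Ω → γ) : ℝ :=
  ∑ a, ∑ b, ∑ c, pushf P (fun ω => (f ω, g ω, h ω)) (a, b, c) *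
      Real.log (pushf P (fun ω => (f ω, g ω, h ω)) (a, b, c) * pushf P h c /
        (pushf P (fun ω => (f ω, h ω)) (a, c) * pushf P (fun ω => (g ω, h ω)) (b, c)))

end InfoDefs
section IFC

variable {X1 X2 Y1 : Type*} [Fintype X1] [DecidableEq X1] [Fintype X2] [DecidableEq X2]
  [Fintype Y1] [DecidableEq Y1]

/-- The function `g(ρ,λ,P,P')`. -/
noncomputable def gFun (q1 : X1 → X2 → Y1 → ℝ) (ρ lam : ℝ)
    (P P' : X1 × X2 × Y1 → ℝ) : ℝ :=
  -(1 - ρ * lam) * (∑ z, P z * Real.log (q1 z.1 z.2.1 z.2.2))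
    - ρ * lam * (∑ z, P' z * Real.log (q1 z.1 z.2.1 z.2.2))

/-- The function `f1(ρ,λ,P,P')`. -/
noncomputable def f1Fun (q1 : X1 → X2 → Y1 → ℝ) (R2 ρ lam : ℝ)
    (P P' : X1 × X2 × Y1 → ℝ) : ℝ :=
  gFun q1 ρ lam P P'
    - condEnt P (fun z => z.1) (fun z => z.2.2)
    + ρ * mutI P' (fun z => z.1) (fun z => z.2.2)
    + max (mutI P (fun z => z.2.1) (fun z => (z.1, z.2.2)) - R2)
        ((1 - ρ * lam) * (mutI P (fun z => z.2.1) (fun z => (z.1, z.2.2)) - R2))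
    + max (max ((1 - ρ) * mutI P' (fun z => z.2.1) (fun z => z.2.2)
            + ρ * mutI P' (fun z => z.2.1) (fun z => (z.1, z.2.2)) - R2)
          (ρ * (mutI P' (fun z => z.2.1) (fun z => (z.1, z.2.2)) - R2)))
        (ρ * lam * (mutI P' (fun z => z.2.1) (fun z => (z.1, z.2.2)) - R2))

/-- The function `f2(ρ,λ,P,P')`. -/
noncomputable def f2Fun (q1 : X1 → X2 → Y1 → ℝ) (R2 ρ lam : ℝ)
    (P P' : X1 × X2 × Y1 → ℝ) : ℝ :=
  gFun q1 ρ lam P P'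
    - condEnt P (fun z => z.1) (fun z => z.2.2)
    + ρ * mutI P' (fun z => z.1) (fun z => (z.2.1, z.2.2))
    + mutI P (fun z => z.2.1) (fun z => (z.1, z.2.2)) - R2

/-- The constraint set `S1(Q1,Q2)`. -/
def S1set (Y1 : Type*) [Fintype Y1] [DecidableEq Y1] (Q1 : X1 → ℝ) (Q2 : X2 → ℝ) :
    Set ((X1 × X2 × Y1 → ℝ) × (X1 × X2 × Y1 → ℝ)) :=
  {PP | IsPMF PP.1 ∧ IsPMF PP.2 ∧
    pushf PP.1 (fun z => z.2.2) = pushf PP.2 (fun z => z.2.2) ∧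
    pushf PP.1 (fun z => z.1) = Q1 ∧ pushf PP.2 (fun z => z.1) = Q1 ∧
    pushf PP.1 (fun z => z.2.1) = Q2 ∧ pushf PP.2 (fun z => z.2.1) = Q2}

/-- The constraint set `S2(Q1,Q2,R2)`. -/
def S2set (Y1 : Type*) [Fintype Y1] [DecidableEq Y1] (Q1 : X1 → ℝ) (Q2 : X2 → ℝ) (R2 : ℝ) :
    Set ((X1 × X2 × Y1 → ℝ) × (X1 × X2 × Y1 → ℝ)) :=
  {PP | IsPMF PP.1 ∧ IsPMF PP.2 ∧
    pushf PP.1 (fun z => z.1) = Q1 ∧ pushf PP.2 (fun z => z.1) = Q1 ∧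
    pushf PP.1 (fun z => z.2.1) = Q2 ∧ pushf PP.2 (fun z => z.2.1) = Q2 ∧
    R2 ≤ mutI PP.1 (fun z => z.2.1) (fun z => z.2.2) ∧
    pushf PP.1 (fun z => (z.2.1, z.2.2)) = pushf PP.2 (fun z => (z.2.1, z.2.2))}

/-- The error exponent `E_{R,1}(R1,R2,Q1,Q2,ρ,λ)` (with `+∞` for infima over empty sets). -/
noncomputable def ER1 (q1 : X1 → X2 → Y1 → ℝ) (R1 R2 : ℝ) (Q1 : X1 → ℝ) (Q2 : X2 → ℝ)
    (ρ lam : ℝ) : EReal :=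
  ((R2 - ρ * R1 : ℝ) : EReal) +
    min (⨅ PP : S1set Y1 Q1 Q2, ((f1Fun q1 R2 ρ lam PP.1.1 PP.1.2 : ℝ) : EReal))
        (⨅ PP : S2set Y1 Q1 Q2 R2, ((f2Fun q1 R2 ρ lam PP.1.1 PP.1.2 : ℝ) : EReal))

end IFC

/-- The set `D(Q1,Q2)` of pairs of joint pmfs with the prescribed `X1`- and `X2`-marginals. -/
def DsetPair (Y1 : Type*) [Fintype Y1] [DecidableEq Y1] {X1 X2 : Type*}
    [Fintype X1] [DecidableEq X1] [Fintype X2] [DecidableEq X2]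
    (Q1 : X1 → ℝ) (Q2 : X2 → ℝ) :
    Set ((X1 × X2 × Y1 → ℝ) × (X1 × X2 × Y1 → ℝ)) :=
  {PP | IsPMF PP.1 ∧ IsPMF PP.2 ∧
    pushf PP.1 (fun z => z.1) = Q1 ∧ pushf PP.2 (fun z => z.1) = Q1 ∧
    pushf PP.1 (fun z => z.2.1) = Q2 ∧ pushf PP.2 (fun z => z.2.1) = Q2}


section ConvexAux

private lemma logsum2 (a b c d : ℝ) (ha : 0 ≤ a) (hb : 0 ≤ b) (hc : 0 ≤ c) (hd : 0 ≤ d)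
    (hac : a ≠ 0 → 0 < c) (hbd : b ≠ 0 → 0 < d) :
    (a + b) * Real.log ((a + b) / (c + d)) ≤ a * Real.log (a / c) + b * Real.log (b / d) := by
  rcases eq_or_lt_of_le ha with h0a | h0a
  · rcases eq_or_lt_of_le hb with h0b | h0b
    · simp [← h0a, ← h0b]
    · have hd' : 0 < d := hbd h0b.ne'
      have h1 : Real.log ((a + b) / (c + d)) ≤ Real.log (b / d) := by
        rw [← h0a, zero_add]
        apply Real.log_le_log (by positivity)
        exact div_le_div_of_nonneg_left hb hd' (by linarith)
      have := mul_le_mul_of_nonneg_left h1 hb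
      simp only [← h0a] at *
      simpa using this
  · rcases eq_or_lt_of_le hb with h0b | h0b
    · have hc' : 0 < c := hac h0a.ne'
      have h1 : Real.log ((a + b) / (c + d)) ≤ Real.log (a / c) := by
        rw [← h0b, add_zero]
        apply Real.log_le_log (by positivity)
        exact div_le_div_of_nonneg_left ha hc' (by linarith)
      have := mul_le_mul_of_nonneg_left h1 ha
      simp only [← h0b] at *
      simpa using this
    · have hc' : 0 < c := hac h0a.ne'
      have hd' : 0 < d := hbd h0b.ne'
      have hcd : 0 < c + d := by linarith
      have h1 : Real.log ((a + b) / (c + d)) - Real.log (a / c)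
          ≤ (a + b) * c / ((c + d) * a) - 1 := by
        rw [← Real.log_div (by positivity) (by positivity)]
        have he : (a + b) / (c + d) / (a / c) = (a + b) * c / ((c + d) * a) := by
          field_simp
        rw [← he]
        exact Real.log_le_sub_one_of_pos (by positivity)
      have h2 : Real.log ((a + b) / (c + d)) - Real.log (b / d)
          ≤ (a + b) * d / ((c + d) * b) - 1 := by
        rw [← Real.log_div (by positivity) (by positivity)]
        have he : (a + b) / (c + d) / (b / d) = (a + b) * d / ((c + d) * b) := by
          field_simp
        rw [← he]
        exact Real.log_le_sub_one_of_pos (by positivity)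
      have e1 : a * ((a + b) * c / ((c + d) * a) - 1) = (a + b) * c / (c + d) - a := by
        field_simp
      have e2 : b * ((a + b) * d / ((c + d) * b) - 1) = (a + b) * d / (c + d) - b := by
        field_simp
      have e3 : (a + b) * c / (c + d) + (a + b) * d / (c + d) = a + b := by
        field_simp
      nlinarith [mul_le_mul_of_nonneg_left h1 ha, mul_le_mul_of_nonneg_left h2 hb]

private lemma scale_log (t a c : ℝ) (ht : 0 ≤ t) :
    t * a * Real.log (t * a / (t * c)) = t * (a * Real.log (a / c)) := by
  rcases eq_or_lt_of_le ht with h | h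
  · simp [← h]
  · rw [mul_div_mul_left _ _ h.ne']; ring

private lemma kl_conv2 {α β : Type*} [Fintype α] [Fintype β] (p p' q q' : α → β → ℝ) (t : ℝ)
    (ht0 : 0 ≤ t) (ht1 : t ≤ 1)
    (hp : ∀ a b, 0 ≤ p a b) (hp' : ∀ a b, 0 ≤ p' a b)
    (hq : ∀ a b, 0 ≤ q a b) (hq' : ∀ a b, 0 ≤ q' a b)
    (hpq : ∀ a b, p a b ≠ 0 → 0 < q a b) (hpq' : ∀ a b, p' a b ≠ 0 → 0 < q' a b) :
    ∑ a, ∑ b, (t * p a b + (1 - t) * p' a b) *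
        Real.log ((t * p a b + (1 - t) * p' a b) / (t * q a b + (1 - t) * q' a b))
      ≤ t * ∑ a, ∑ b, p a b * Real.log (p a b / q a b)
        + (1 - t) * ∑ a, ∑ b, p' a b * Real.log (p' a b / q' a b) := by
  rw [Finset.mul_sum, Finset.mul_sum, ← Finset.sum_add_distrib]
  apply Finset.sum_le_sum; intro a _
  rw [Finset.mul_sum, Finset.mul_sum, ← Finset.sum_add_distrib]
  apply Finset.sum_le_sum; intro b _
  have ht1' : (0:ℝ) ≤ 1 - t := by linarith
  have key := logsum2 (t * p a b) ((1 - t) * p' a b) (t * q a b) ((1 - t) * q' a b)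
    (mul_nonneg ht0 (hp a b)) (mul_nonneg ht1' (hp' a b))
    (mul_nonneg ht0 (hq a b)) (mul_nonneg ht1' (hq' a b))
    (fun h => by
      rcases mul_ne_zero_iff.mp h with ⟨h1, h2⟩
      exact mul_pos (ht0.lt_of_ne (Ne.symm h1)) (hpq a b h2))
    (fun h => by
      rcases mul_ne_zero_iff.mp h with ⟨h1, h2⟩
      exact mul_pos (ht1'.lt_of_ne (Ne.symm h1)) (hpq' a b h2))
  calc (t * p a b + (1 - t) * p' a b) *
        Real.log ((t * p a b + (1 - t) * p' a b) / (t * q a b + (1 - t) * q' a b))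
      ≤ t * p a b * Real.log (t * p a b / (t * q a b))
        + (1 - t) * p' a b * Real.log ((1 - t) * p' a b / ((1 - t) * q' a b)) := key
    _ = t * (p a b * Real.log (p a b / q a b))
        + (1 - t) * (p' a b * Real.log (p' a b / q' a b)) := by
        rw [scale_log _ _ _ ht0, scale_log _ _ _ ht1']

private lemma pushf_lin {Ω α : Type*} [Fintype Ω] [Fintype α] [DecidableEq α]
    (P P' : Ω → ℝ) (s u : ℝ) (f : Ω → α) (a : α) :
    pushf (fun ω => s * P ω + u * P' ω) f a = s * pushf P f a + u * pushf P' f a := by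
  simp only [pushf, Finset.mul_sum, ← Finset.sum_add_distrib]
  apply Finset.sum_congr rfl
  intro ω _
  split_ifs <;> simp

private lemma pushf_nonneg {Ω α : Type*} [Fintype Ω] [Fintype α] [DecidableEq α]
    {P : Ω → ℝ} (hP : ∀ ω, 0 ≤ P ω) (f : Ω → α) (a : α) : 0 ≤ pushf P f a := by
  apply Finset.sum_nonneg
  intro ω _
  split_ifs
  · exact hP ω
  · exact le_refl 0

private lemma pushf_pair_le_left {Ω α β : Type*} [Fintype Ω] [Fintype α] [DecidableEq α]
    [Fintype β] [DecidableEq β] {P : Ω → ℝ} (hP : ∀ ω, 0 ≤ P ω)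
    (f : Ω → α) (g : Ω → β) (a : α) (b : β) :
    pushf P (fun ω => (f ω, g ω)) (a, b) ≤ pushf P f a := by
  apply Finset.sum_le_sum
  intro ω _
  dsimp only
  split_ifs with h1 h2
  · exact le_refl _
  · exact absurd (congrArg Prod.fst h1) h2
  · exact hP ω
  · exact le_refl 0

private lemma pushf_pair_le_right {Ω α β : Type*} [Fintype Ω] [Fintype α] [DecidableEq α]
    [Fintype β] [DecidableEq β] {P : Ω → ℝ} (hP : ∀ ω, 0 ≤ P ω)
    (f : Ω → α) (g : Ω → β) (a : α) (b : β) :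
    pushf P (fun ω => (f ω, g ω)) (a, b) ≤ pushf P g b := by
  apply Finset.sum_le_sum
  intro ω _
  dsimp only
  split_ifs with h1 h2
  · exact le_refl _
  · exact absurd (congrArg Prod.snd h1) h2
  · exact hP ω
  · exact le_refl 0

private lemma condEnt_mix {Ω α β : Type*} [Fintype Ω] [Fintype α] [DecidableEq α]
    [Fintype β] [DecidableEq β] (P P' : Ω → ℝ) (hP : ∀ ω, 0 ≤ P ω) (hP' : ∀ ω, 0 ≤ P' ω)
    (f : Ω → α) (g : Ω → β) (t : ℝ) (ht0 : 0 ≤ t) (ht1 : t ≤ 1) :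
    t * condEnt P f g + (1 - t) * condEnt P' f g
      ≤ condEnt (fun ω => t * P ω + (1 - t) * P' ω) f g := by
  have h := kl_conv2 (fun a b => pushf P (fun ω => (f ω, g ω)) (a, b))
      (fun a b => pushf P' (fun ω => (f ω, g ω)) (a, b))
      (fun a _ => pushf P f a) (fun a _ => pushf P' f a) t ht0 ht1
      (fun a b => pushf_nonneg hP _ _) (fun a b => pushf_nonneg hP' _ _)
      (fun a b => pushf_nonneg hP _ _) (fun a b => pushf_nonneg hP' _ _)
      (fun a b h => lt_of_lt_of_le ((pushf_nonneg hP _ _).lt_of_ne (Ne.symm h))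
        (pushf_pair_le_left hP f g a b))
      (fun a b h => lt_of_lt_of_le ((pushf_nonneg hP' _ _).lt_of_ne (Ne.symm h))
        (pushf_pair_le_left hP' f g a b))
  simp only [condEnt, pushf_lin, mul_neg, ← neg_add]
  exact neg_le_neg h

private lemma mutI_mix {Ω α β : Type*} [Fintype Ω] [Fintype α] [DecidableEq α]
    [Fintype β] [DecidableEq β] (P P' : Ω → ℝ) (hP : ∀ ω, 0 ≤ P ω) (hP' : ∀ ω, 0 ≤ P' ω)
    (f : Ω → α) (g : Ω → β) (hm : ∀ a, pushf P f a = pushf P' f a)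
    (t : ℝ) (ht0 : 0 ≤ t) (ht1 : t ≤ 1) :
    mutI (fun ω => t * P ω + (1 - t) * P' ω) f g
      ≤ t * mutI P f g + (1 - t) * mutI P' f g := by
  have hden : ∀ (a : α) (b : β),
      (t * pushf P f a + (1 - t) * pushf P' f a) *
        (t * pushf P g b + (1 - t) * pushf P' g b)
      = t * (pushf P f a * pushf P g b) + (1 - t) * (pushf P' f a * pushf P' g b) := by
    intro a b
    rw [← hm a]; ring
  have h := kl_conv2 (fun a b => pushf P (fun ω => (f ω, g ω)) (a, b))
      (fun a b => pushf P' (fun ω => (f ω, g ω)) (a, b))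
      (fun a b => pushf P f a * pushf P g b)
      (fun a b => pushf P' f a * pushf P' g b) t ht0 ht1
      (fun a b => pushf_nonneg hP _ _) (fun a b => pushf_nonneg hP' _ _)
      (fun a b => mul_nonneg (pushf_nonneg hP _ _) (pushf_nonneg hP _ _))
      (fun a b => mul_nonneg (pushf_nonneg hP' _ _) (pushf_nonneg hP' _ _))
      (fun a b h => by
        have hj : 0 < pushf P (fun ω => (f ω, g ω)) (a, b) :=
          (pushf_nonneg hP _ _).lt_of_ne (Ne.symm h)
        exact mul_pos (hj.trans_le (pushf_pair_le_left hP f g a b))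
          (hj.trans_le (pushf_pair_le_right hP f g a b)))
      (fun a b h => by
        have hj : 0 < pushf P' (fun ω => (f ω, g ω)) (a, b) :=
          (pushf_nonneg hP' _ _).lt_of_ne (Ne.symm h)
        exact mul_pos (hj.trans_le (pushf_pair_le_left hP' f g a b))
          (hj.trans_le (pushf_pair_le_right hP' f g a b)))
  simp only [mutI, pushf_lin, hden]
  exact h

private lemma gFun_lin {X1 X2 Y1 : Type*} [Fintype X1] [DecidableEq X1] [Fintype X2]
    [DecidableEq X2] [Fintype Y1] [DecidableEq Y1]
    (q1 : X1 → X2 → Y1 → ℝ) (ρ lam t : ℝ) (P P' Pt Pt' : X1 × X2 × Y1 → ℝ) :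
    gFun q1 ρ lam (fun z => t * P z + (1 - t) * Pt z) (fun z => t * P' z + (1 - t) * Pt' z)
      = t * gFun q1 ρ lam P P' + (1 - t) * gFun q1 ρ lam Pt Pt' := by
  have h : ∀ A B : X1 × X2 × Y1 → ℝ,
      ∑ z, (t * A z + (1 - t) * B z) * Real.log (q1 z.1 z.2.1 z.2.2)
        = t * ∑ z, A z * Real.log (q1 z.1 z.2.1 z.2.2)
          + (1 - t) * ∑ z, B z * Real.log (q1 z.1 z.2.1 z.2.2) := by
    intro A B
    rw [Finset.mul_sum, Finset.mul_sum, ← Finset.sum_add_distrib]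
    exact Finset.sum_congr rfl (fun z _ => by ring)
  simp only [gFun, h]
  ring

end ConvexAux

/-- `(P,P') ↦ f2(ρ,λ,P,P')` is convex on `D(Q1,Q2)`. -/
theorem stmt2 {X1 X2 Y1 : Type*} [Fintype X1] [DecidableEq X1] [Fintype X2] [DecidableEq X2]
    [Fintype Y1] [DecidableEq Y1]
    (q1 : X1 → X2 → Y1 → ℝ) (hq_pos : ∀ x1 x2 y, 0 < q1 x1 x2 y)
    (hq_sum : ∀ x1 x2, ∑ y, q1 x1 x2 y = 1)
    (ρ lam : ℝ) (hρ0 : 0 ≤ ρ) (hρ1 : ρ ≤ 1) (hlam0 : 0 ≤ lam) (hlam1 : lam ≤ 1)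
    (R2 : ℝ) (Q1 : X1 → ℝ) (Q2 : X2 → ℝ) (hQ1 : IsPMF Q1) (hQ2 : IsPMF Q2) :
    ∀ PP ∈ DsetPair Y1 Q1 Q2, ∀ PPt ∈ DsetPair Y1 Q1 Q2, ∀ t : ℝ, 0 ≤ t → t ≤ 1 →
      f2Fun q1 R2 ρ lam (fun z => t * PP.1 z + (1 - t) * PPt.1 z)
          (fun z => t * PP.2 z + (1 - t) * PPt.2 z)
        ≤ t * f2Fun q1 R2 ρ lam PP.1 PP.2 + (1 - t) * f2Fun q1 R2 ρ lam PPt.1 PPt.2 := by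
  rintro ⟨P, P'⟩ ⟨hP, hP', hq1a, hq1b, hq2a, hq2b⟩
    ⟨Pt, Pt'⟩ ⟨hPt, hPt', hq1at, hq1bt, hq2at, hq2bt⟩ t ht0 ht1
  have hg := gFun_lin q1 ρ lam t P P' Pt Pt'
  have hce := condEnt_mix P Pt hP.1 hPt.1 (fun z => z.1) (fun z => z.2.2) t ht0 ht1
  have hmi := mutI_mix P Pt hP.1 hPt.1 (fun z => z.2.1) (fun z => (z.1, z.2.2))
    (fun a => (congrFun hq2a a).trans (congrFun hq2at a).symm) t ht0 ht1
  have hmi' := mutI_mix P' Pt' hP'.1 hPt'.1 (fun z => z.1) (fun z => (z.2.1, z.2.2))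
    (fun a => (congrFun hq1b a).trans (congrFun hq1bt a).symm) t ht0 ht1
  have hmi'r : ρ * mutI (fun z => t * P' z + (1 - t) * Pt' z)
        (fun z => z.1) (fun z => (z.2.1, z.2.2))
      ≤ t * (ρ * mutI P' (fun z => z.1) (fun z => (z.2.1, z.2.2)))
        + (1 - t) * (ρ * mutI Pt' (fun z => z.1) (fun z => (z.2.1, z.2.2))) := by
    calc ρ * mutI (fun z => t * P' z + (1 - t) * Pt' z)
          (fun z => z.1) (fun z => (z.2.1, z.2.2))
        ≤ ρ * (t * mutI P' (fun z => z.1) (fun z => (z.2.1, z.2.2))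
            + (1 - t) * mutI Pt' (fun z => z.1) (fun z => (z.2.1, z.2.2))) :=
          mul_le_mul_of_nonneg_left hmi' hρ0
      _ = _ := by ring
  simp only [f2Fun]
  rw [hg]
  linarith [hce, hmi, hmi'r]
end

section
/- Fix R1, R2 ≥ 0, pmfs Q1 on 𝒳1 and Q2 on 𝒳2, and a channel q1 with q1(y|x1,x2) > 0 for all arguments, and let P* be the joint pmf on 𝒳1×𝒳2×𝒴1 given by P*(x1,x2,y) = Q1(x1)·Q2(x2)·q1(y|x1,x2). If R1 < I(X̂1;Ŷ1) + |I(X̂2;Ŷ1|X̂1) − R2|⁺ and R1 < I(X̂1;Ŷ1|X̂2), where all information quantities are computed under P*, then sup_{(ρ,λ)∈[0,1]²} E_{R,1}(R1, R2, Q1, Q2, ρ, λ) > 0. -/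
open Finset

/-!
Take `λ = 1`. For `P` with input marginals `Q1, Q2`, the channel term `-E_P[log q1]` equals
`D(P‖P*) + H(X1,X2,Y) - H(X1) - H(X2)`, and substituting this into `f1`, `f2` leaves
`(1-ρ) D(P‖P*) + ρ D(P'‖P*) - R2 + ρ φᵢ(P)` as a lower bound, with
`φ₁(P) = I(X1;Y) + |I(X2;X1,Y) - R2|⁺` and `φ₂(P) = I(X1;X2,Y)` (`rateS1`, `rateS2`).
At `P = P*` the inputs are independent, so by the chain rule `φ₁, φ₂` become the two
right-hand sides of the hypotheses. Hence `E_{R,1}(ρ,1) ≥ inf_P (1-ρ) D(P‖P*) + ρ (min φᵢ(P) - R1)`,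
the infimum over the compact set of pmfs with input marginals `Q1, Q2`. There `D(P‖P*)`
vanishes only at `P*`, where the second term is positive, so for small `ρ > 0` the infimum is
positive.
-/

open Real Function

section Entropy

variable {Ω α β γ : Type*} [Fintype Ω] [Fintype α] [DecidableEq α] [Fintype β] [DecidableEq β]
  [Fintype γ] [DecidableEq γ] {P : Ω → ℝ} {f : Ω → α} {g : Ω → β} {h : Ω → γ}

lemma sum_pushf_mul (φ : α → ℝ) : ∑ a, pushf P f a * φ a = ∑ ω, P ω * φ (f ω) := by
  simp only [pushf, Finset.sum_mul, ite_mul, zero_mul]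
  rw [Finset.sum_comm]
  simp

lemma le_pushf (hP : ∀ ω, 0 ≤ P ω) (ω : Ω) : P ω ≤ pushf P f (f ω) :=
  calc P ω = if f ω = f ω then P ω else 0 := (if_pos rfl).symm
    _ ≤ pushf P f (f ω) := Finset.single_le_sum (f := fun ω' => if f ω' = f ω then P ω' else 0)
      (fun ω' _ => by split_ifs <;> simp [hP ω']) (Finset.mem_univ ω)

lemma pushf_comp_of_injective {k : α → β} (hk : Injective k) (a : α) :
    pushf P (fun ω => k (f ω)) (k a) = pushf P f a := by
  simp only [pushf, hk.eq_iff]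

lemma entH_comp_of_injective {k : α → β} (hk : Injective k) :
    entH P (fun ω => k (f ω)) = entH P f := by
  unfold entH
  congr 1
  refine (Fintype.sum_of_injective k hk (fun a => pushf P f a * log (pushf P f a))
    (fun b => pushf P (fun ω => k (f ω)) b * log (pushf P (fun ω => k (f ω)) b))
    (fun b hb => ?_) (fun a => by rw [pushf_comp_of_injective hk])).symm
  have : pushf P (fun ω => k (f ω)) b = 0 :=
    Finset.sum_eq_zero fun ω _ => if_neg fun h => hb ⟨f ω, h⟩
  simp [this]

lemma entH_eq_of_pushf_eq {P' : Ω → ℝ} (h : pushf P f = pushf P' f) : entH P f = entH P' f := by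
  rw [entH, entH, h]

lemma entH_eq_sum : entH P f = -∑ ω, P ω * log (pushf P f (f ω)) := by
  rw [entH, sum_pushf_mul (fun a => log (pushf P f a))]

lemma mutI_eq_entH (hP : ∀ ω, 0 ≤ P ω) :
    mutI P f g = entH P f + entH P g - entH P (fun ω => (f ω, g ω)) := by
  rw [mutI, ← Fintype.sum_prod_type', sum_pushf_mul (f := fun ω => (f ω, g ω))
      (fun c => log (pushf P (fun ω => (f ω, g ω)) c / (pushf P f c.1 * pushf P g c.2))),
    entH_eq_sum, entH_eq_sum, entH_eq_sum]
  simp only [← Finset.sum_neg_distrib, ← Finset.sum_add_distrib, ← Finset.sum_sub_distrib]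
  refine Finset.sum_congr rfl fun ω _ => ?_
  rcases (hP ω).eq_or_lt with h0 | h0
  · simp [← h0]
  · have hf := h0.trans_le (le_pushf hP ω (f := f))
    have hg := h0.trans_le (le_pushf hP ω (f := g))
    have hfg := h0.trans_le (le_pushf hP ω (f := fun ω => (f ω, g ω)))
    rw [log_div hfg.ne' (mul_pos hf hg).ne', log_mul hf.ne' hg.ne']
    ring

lemma mutI_comm (hP : ∀ ω, 0 ≤ P ω) : mutI P f g = mutI P g f := by
  rw [mutI_eq_entH hP, mutI_eq_entH hP,
    ← entH_comp_of_injective (f := fun ω => (f ω, g ω)) Prod.swap_injective]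
  simp only [Prod.swap_prod_mk]
  ring

lemma condEnt_eq_entH (hP : ∀ ω, 0 ≤ P ω) :
    condEnt P f g = entH P (fun ω => (f ω, g ω)) - entH P f := by
  rw [condEnt, ← Fintype.sum_prod_type', sum_pushf_mul (f := fun ω => (f ω, g ω))
      (fun c => log (pushf P (fun ω => (f ω, g ω)) c / pushf P f c.1)),
    entH_eq_sum, entH_eq_sum]
  simp only [← Finset.sum_neg_distrib, ← Finset.sum_sub_distrib]
  refine Finset.sum_congr rfl fun ω _ => ?_
  rcases (hP ω).eq_or_lt with h0 | h0
  · simp [← h0]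
  · have hf := h0.trans_le (le_pushf hP ω (f := f))
    have hfg := h0.trans_le (le_pushf hP ω (f := fun ω => (f ω, g ω)))
    rw [log_div hfg.ne' hf.ne']
    ring

lemma condMutI_eq_entH (hP : ∀ ω, 0 ≤ P ω) :
    condMutI P f g h = entH P (fun ω => (f ω, h ω)) + entH P (fun ω => (g ω, h ω))
      - entH P (fun ω => (f ω, g ω, h ω)) - entH P h := by
  rw [condMutI]
  simp only [← Fintype.sum_prod_type']
  rw [sum_pushf_mul (f := fun ω => (f ω, g ω, h ω))
      (fun t => log (pushf P (fun ω => (f ω, g ω, h ω)) t * pushf P h t.2.2 /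
        (pushf P (fun ω => (f ω, h ω)) (t.1, t.2.2) *
          pushf P (fun ω => (g ω, h ω)) (t.2.1, t.2.2)))),
    entH_eq_sum, entH_eq_sum, entH_eq_sum, entH_eq_sum]
  simp only [← Finset.sum_neg_distrib, ← Finset.sum_add_distrib, ← Finset.sum_sub_distrib]
  refine Finset.sum_congr rfl fun ω _ => ?_
  rcases (hP ω).eq_or_lt with h0 | h0
  · simp [← h0]
  · have hfh := h0.trans_le (le_pushf hP ω (f := fun ω => (f ω, h ω)))
    have hgh := h0.trans_le (le_pushf hP ω (f := fun ω => (g ω, h ω)))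
    have hfgh := h0.trans_le (le_pushf hP ω (f := fun ω => (f ω, g ω, h ω)))
    have hh := h0.trans_le (le_pushf hP ω (f := h))
    rw [log_div (mul_pos hfgh hh).ne' (mul_pos hfh hgh).ne', log_mul hfgh.ne' hh.ne',
      log_mul hfh.ne' hgh.ne']
    ring

lemma mutI_prod_eq_add_condMutI (hP : ∀ ω, 0 ≤ P ω) :
    mutI P f (fun ω => (g ω, h ω)) = mutI P f g + condMutI P f h g := by
  have hswap : entH P (fun ω => (h ω, g ω)) = entH P (fun ω => (g ω, h ω)) :=
    entH_comp_of_injective (f := fun ω => (g ω, h ω)) Prod.swap_injective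
  have hswap' : entH P (fun ω => (f ω, h ω, g ω)) = entH P (fun ω => (f ω, g ω, h ω)) :=
    entH_comp_of_injective (f := fun ω => (f ω, g ω, h ω))
      (k := fun t => (t.1, t.2.2, t.2.1)) fun s t hst => by
        simp only [Prod.mk.injEq] at hst; exact Prod.ext hst.1 (Prod.ext hst.2.2 hst.2.1)
  rw [mutI_eq_entH hP, mutI_eq_entH hP, condMutI_eq_entH hP, hswap, hswap']
  ring

lemma mutI_eq_zero_of_pushf_eq_mul
    (hind : ∀ a b, pushf P (fun ω => (f ω, g ω)) (a, b) = pushf P f a * pushf P g b) :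
    mutI P f g = 0 := by
  refine Finset.sum_eq_zero fun a _ => Finset.sum_eq_zero fun b _ => ?_
  rw [hind]
  rcases eq_or_ne (pushf P f a * pushf P g b) 0 with h0 | h0
  · rw [h0, zero_mul]
  · rw [div_self h0, log_one, mul_zero]

lemma continuous_pushf (f : Ω → α) (a : α) : Continuous fun P : Ω → ℝ => pushf P f a :=
  continuous_finsetSum _ fun ω _ => by
    split_ifs
    · exact continuous_apply ω
    · exact continuous_const

lemma continuous_entH (f : Ω → α) : Continuous fun P : Ω → ℝ => entH P f :=
  (continuous_finsetSum _ fun a _ => continuous_mul_log.comp (continuous_pushf f a)).neg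

lemma continuousOn_mutI (f : Ω → α) (g : Ω → β) :
    ContinuousOn (fun P : Ω → ℝ => mutI P f g) {P | ∀ ω, 0 ≤ P ω} :=
  (((continuous_entH f).add (continuous_entH g)).sub
    (continuous_entH _)).continuousOn.congr fun _ hP => mutI_eq_entH hP

end Entropy

section RelativeEntropy

open InformationTheory

variable {Ω : Type*} [Fintype Ω]

noncomputable def relEnt (P Q : Ω → ℝ) : ℝ := ∑ ω, P ω * (log (P ω) - log (Q ω))

lemma mul_log_sub_log_eq_klFun {p q : ℝ} (hq : 0 ≤ q) (hpq : q = 0 → p = 0) :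
    p * (log p - log q) = q * klFun (p / q) + p - q := by
  rcases hq.eq_or_lt with rfl | hq
  · simp [hpq rfl]
  rcases eq_or_ne p 0 with rfl | hp
  · simp [klFun_zero]
  rw [klFun_apply, log_div hp hq.ne']
  field_simp
  ring

variable {P Q : Ω → ℝ}

lemma relEnt_eq_sum_klFun (hP : IsPMF P) (hQ : IsPMF Q) (hsupp : ∀ ω, Q ω = 0 → P ω = 0) :
    relEnt P Q = ∑ ω, Q ω * klFun (P ω / Q ω) := by
  rw [relEnt, Finset.sum_congr rfl fun ω _ => mul_log_sub_log_eq_klFun (hQ.1 ω) (hsupp ω),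
    Finset.sum_sub_distrib, Finset.sum_add_distrib, hP.2, hQ.2, add_sub_cancel_right]

lemma relEnt_nonneg (hP : IsPMF P) (hQ : IsPMF Q) (hsupp : ∀ ω, Q ω = 0 → P ω = 0) :
    0 ≤ relEnt P Q := by
  rw [relEnt_eq_sum_klFun hP hQ hsupp]
  exact Finset.sum_nonneg fun ω _ =>
    mul_nonneg (hQ.1 ω) (klFun_nonneg (div_nonneg (hP.1 ω) (hQ.1 ω)))

lemma relEnt_pos (hP : IsPMF P) (hQ : IsPMF Q) (hsupp : ∀ ω, Q ω = 0 → P ω = 0)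
    (hne : P ≠ Q) : 0 < relEnt P Q := by
  obtain ⟨ω₀, hω₀⟩ := Function.ne_iff.mp hne
  have hQω₀ : 0 < Q ω₀ :=
    (hQ.1 ω₀).lt_of_ne fun h => hω₀ ((hsupp ω₀ h.symm).trans h)
  have hratio : 0 ≤ P ω₀ / Q ω₀ := div_nonneg (hP.1 ω₀) hQω₀.le
  rw [relEnt_eq_sum_klFun hP hQ hsupp]
  refine Finset.sum_pos' (fun ω _ => mul_nonneg (hQ.1 ω)
    (klFun_nonneg (div_nonneg (hP.1 ω) (hQ.1 ω)))) ⟨ω₀, Finset.mem_univ _, ?_⟩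
  refine mul_pos hQω₀ ((klFun_nonneg hratio).lt_of_ne fun h => hω₀ ?_)
  rw [eq_comm, klFun_eq_zero_iff hratio, div_eq_one_iff_eq hQω₀.ne'] at h
  exact h

lemma continuous_relEnt (Q : Ω → ℝ) : Continuous fun P : Ω → ℝ => relEnt P Q := by
  simp only [relEnt, mul_sub]
  exact continuous_finsetSum _ fun ω _ =>
    (continuous_mul_log.comp (continuous_apply ω)).sub
      ((continuous_apply ω).mul continuous_const)

end RelativeEntropy

lemma isCompact_setOf_isPMF {Ω : Type*} [Fintype Ω] : IsCompact {P : Ω → ℝ | IsPMF P} := by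
  refine (isCompact_Icc (a := (0 : Ω → ℝ)) (b := 1)).of_isClosed_subset ?_
    fun P hP => ⟨hP.1, fun ω => ?_⟩
  · simp only [IsPMF, Set.ofPred_and, Set.ofPred_forall]
    exact (isClosed_iInter fun ω => isClosed_le continuous_const (continuous_apply ω)).inter
      (isClosed_eq (continuous_finsetSum _ fun ω _ => continuous_apply ω) continuous_const)
  · simpa [hP.2] using Finset.single_le_sum (fun ω _ => hP.1 ω) (mem_univ ω)

lemma exists_forall_le_convex_combination {E : Type*} [TopologicalSpace E] {K : Set E}
    (hK : IsCompact K) {D φ : E → ℝ} (hD : ContinuousOn D K) (hφ : ContinuousOn φ K)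
    (hD0 : ∀ x ∈ K, 0 ≤ D x) (hpos : ∀ x ∈ K, 0 < D x ∨ 0 < φ x) :
    ∃ ρ ∈ Set.Icc (0 : ℝ) 1, ∃ ε > 0, ∀ x ∈ K, ε ≤ (1 - ρ) * D x + ρ * φ x := by
  rcases K.eq_empty_or_nonempty with rfl | hne
  · exact ⟨1, Set.right_mem_Icc.mpr zero_le_one, 1, one_pos, by simp⟩
  obtain ⟨x₀, hx₀, hmin⟩ := hK.exists_isMinOn hne (hD.sup hφ)
  obtain ⟨x₁, -, hφmin⟩ := hK.exists_isMinOn hne hφ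
  set m := D x₀ ⊔ φ x₀
  set L := min (φ x₁) 0
  have hm : 0 < m := (hpos x₀ hx₀).elim (lt_sup_of_lt_left ·) (lt_sup_of_lt_right ·)
  have hL : L ≤ 0 := min_le_right _ _
  have hden : 0 < 2 * m - L := by linarith
  -- `ρ` balances the two cases: `(1 - ρ) m + ρ L = ρ m`.
  set ρ := m / (2 * m - L)
  have hρ : ρ * (2 * m - L) = m := div_mul_cancel₀ m hden.ne'
  have hρ0 : 0 < ρ := div_pos hm hden
  have hρ1 : ρ ≤ 1 / 2 := by rw [div_le_iff₀ hden]; linarith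
  refine ⟨ρ, ⟨hρ0.le, by linarith⟩, ρ * m, mul_pos hρ0 hm, fun x hx => ?_⟩
  have hφL : L ≤ φ x := (min_le_left _ _).trans (hφmin hx)
  rcases le_sup_iff.mp (show m ≤ D x ⊔ φ x from hmin hx) with hDx | hφx
  · nlinarith
  · nlinarith [hD0 x hx]

section Channel

variable {X1 X2 Y1 : Type*} [Fintype X1] [Fintype X2] [Fintype Y1]
  {q1 : X1 → X2 → Y1 → ℝ} {Q1 : X1 → ℝ} {Q2 : X2 → ℝ}

def jointPMF (q1 : X1 → X2 → Y1 → ℝ) (Q1 : X1 → ℝ) (Q2 : X2 → ℝ) : X1 × X2 × Y1 → ℝ :=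
  fun z => Q1 z.1 * Q2 z.2.1 * q1 z.1 z.2.1 z.2.2

lemma pushf_jointPMF_inputs [DecidableEq X1] [DecidableEq X2]
    (hq_sum : ∀ x1 x2, ∑ y, q1 x1 x2 y = 1) (a : X1) (b : X2) :
    pushf (jointPMF q1 Q1 Q2) (fun z => (z.1, z.2.1)) (a, b) = Q1 a * Q2 b := by
  simp [pushf, jointPMF, Fintype.sum_prod_type, ← Finset.mul_sum, hq_sum, ite_and]

lemma pushf_jointPMF_fst [DecidableEq X1] (hq_sum : ∀ x1 x2, ∑ y, q1 x1 x2 y = 1)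
    (hQ2 : IsPMF Q2) : pushf (jointPMF q1 Q1 Q2) (fun z => z.1) = Q1 := by
  funext a
  simp [pushf, jointPMF, Fintype.sum_prod_type, ← Finset.mul_sum, hq_sum, hQ2.2]

lemma pushf_jointPMF_snd [DecidableEq X2] (hq_sum : ∀ x1 x2, ∑ y, q1 x1 x2 y = 1)
    (hQ1 : IsPMF Q1) : pushf (jointPMF q1 Q1 Q2) (fun z => z.2.1) = Q2 := by
  funext b
  simp [pushf, jointPMF, Fintype.sum_prod_type, ← Finset.mul_sum, ← Finset.sum_mul, hq_sum,
    hQ1.2]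

lemma isPMF_jointPMF (hq_pos : ∀ x1 x2 y, 0 < q1 x1 x2 y)
    (hq_sum : ∀ x1 x2, ∑ y, q1 x1 x2 y = 1) (hQ1 : IsPMF Q1) (hQ2 : IsPMF Q2) :
    IsPMF (jointPMF q1 Q1 Q2) :=
  ⟨fun z => mul_nonneg (mul_nonneg (hQ1.1 _) (hQ2.1 _)) (hq_pos _ _ _).le, by
    simp [jointPMF, Fintype.sum_prod_type, ← Finset.mul_sum, hq_sum, hQ1.2, hQ2.2]⟩

variable [DecidableEq X1] [DecidableEq X2]

def pmfsWithInputs (Y1 : Type*) [Fintype Y1] (Q1 : X1 → ℝ) (Q2 : X2 → ℝ) :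
    Set (X1 × X2 × Y1 → ℝ) :=
  {P | IsPMF P ∧ pushf P (fun z => z.1) = Q1 ∧ pushf P (fun z => z.2.1) = Q2}

lemma isCompact_pmfsWithInputs : IsCompact (pmfsWithInputs Y1 Q1 Q2) :=
  isCompact_setOf_isPMF.inter_right <|
    (isClosed_eq (continuous_pi fun a => continuous_pushf _ a) continuous_const).inter
      (isClosed_eq (continuous_pi fun b => continuous_pushf _ b) continuous_const)

lemma jointPMF_mem_pmfsWithInputs (hq_pos : ∀ x1 x2 y, 0 < q1 x1 x2 y)
    (hq_sum : ∀ x1 x2, ∑ y, q1 x1 x2 y = 1) (hQ1 : IsPMF Q1) (hQ2 : IsPMF Q2) :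
    jointPMF q1 Q1 Q2 ∈ pmfsWithInputs Y1 Q1 Q2 :=
  ⟨isPMF_jointPMF hq_pos hq_sum hQ1 hQ2, pushf_jointPMF_fst hq_sum hQ2,
    pushf_jointPMF_snd hq_sum hQ1⟩

lemma eq_zero_of_jointPMF_eq_zero (hq_pos : ∀ x1 x2 y, 0 < q1 x1 x2 y)
    {P : X1 × X2 × Y1 → ℝ} (hP : P ∈ pmfsWithInputs Y1 Q1 Q2) {z : X1 × X2 × Y1}
    (hz : jointPMF q1 Q1 Q2 z = 0) : P z = 0 := by
  have h1 := le_pushf (f := fun z : X1 × X2 × Y1 => z.1) hP.1.1 z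
  have h2 := le_pushf (f := fun z : X1 × X2 × Y1 => z.2.1) hP.1.1 z
  rw [hP.2.1] at h1
  rw [hP.2.2] at h2
  rcases mul_eq_zero.mp hz with hz | hz
  · rcases mul_eq_zero.mp hz with hz | hz
    · exact le_antisymm (hz ▸ h1) (hP.1.1 z)
    · exact le_antisymm (hz ▸ h2) (hP.1.1 z)
  · exact absurd hz (hq_pos _ _ _).ne'

section RelEntJointPMF

variable (hq_pos : ∀ x1 x2 y, 0 < q1 x1 x2 y) (hq_sum : ∀ x1 x2, ∑ y, q1 x1 x2 y = 1)
  (hQ1 : IsPMF Q1) (hQ2 : IsPMF Q2) {P : X1 × X2 × Y1 → ℝ} (hP : P ∈ pmfsWithInputs Y1 Q1 Q2)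
include hq_pos hq_sum hQ1 hQ2 hP

lemma relEnt_jointPMF_nonneg : 0 ≤ relEnt P (jointPMF q1 Q1 Q2) :=
  relEnt_nonneg hP.1 (isPMF_jointPMF hq_pos hq_sum hQ1 hQ2)
    fun _ => eq_zero_of_jointPMF_eq_zero hq_pos hP

lemma relEnt_jointPMF_pos (hne : P ≠ jointPMF q1 Q1 Q2) : 0 < relEnt P (jointPMF q1 Q1 Q2) :=
  relEnt_pos hP.1 (isPMF_jointPMF hq_pos hq_sum hQ1 hQ2)
    (fun _ => eq_zero_of_jointPMF_eq_zero hq_pos hP) hne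

end RelEntJointPMF

lemma mutI_inputs_jointPMF (hq_sum : ∀ x1 x2, ∑ y, q1 x1 x2 y = 1) (hQ1 : IsPMF Q1)
    (hQ2 : IsPMF Q2) :
    mutI (jointPMF q1 Q1 Q2) (fun z => z.1) (fun z => z.2.1) = 0 :=
  mutI_eq_zero_of_pushf_eq_mul fun a b => by
    rw [pushf_jointPMF_inputs hq_sum, pushf_jointPMF_fst hq_sum hQ2,
      pushf_jointPMF_snd hq_sum hQ1]

lemma sum_mul_log_channel [DecidableEq Y1] (hq_pos : ∀ x1 x2 y, 0 < q1 x1 x2 y)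
    {P : X1 × X2 × Y1 → ℝ} (hP : P ∈ pmfsWithInputs Y1 Q1 Q2) :
    ∑ z, P z * log (q1 z.1 z.2.1 z.2.2) = entH P (fun z => z.1) + entH P (fun z => z.2.1)
      - entH P (fun z => z) - relEnt P (jointPMF q1 Q1 Q2) := by
  have hlog : ∀ z, P z * log (jointPMF q1 Q1 Q2 z)
      = P z * (log (Q1 z.1) + log (Q2 z.2.1) + log (q1 z.1 z.2.1 z.2.2)) := fun z => by
    rcases (hP.1.1 z).eq_or_lt with h0 | h0
    · rw [← h0, zero_mul, zero_mul]
    have h1 := h0.trans_le (hP.2.1 ▸ le_pushf (f := fun z : X1 × X2 × Y1 => z.1) hP.1.1 z)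
    have h2 := h0.trans_le (hP.2.2 ▸ le_pushf (f := fun z : X1 × X2 × Y1 => z.2.1) hP.1.1 z)
    rw [jointPMF, log_mul (mul_pos h1 h2).ne' (hq_pos _ _ _).ne', log_mul h1.ne' h2.ne']
  have hid : ∀ z, pushf P (fun z => z) z = P z := fun z => by simp [pushf]
  rw [relEnt, entH_eq_sum, entH_eq_sum, entH_eq_sum, hP.2.1, hP.2.2]
  simp only [hid, mul_sub, Finset.sum_sub_distrib, hlog, mul_add, Finset.sum_add_distrib]
  ring

end Channel

section Exponent

variable {X1 X2 Y1 : Type*} [Fintype X1] [DecidableEq X1] [Fintype X2] [DecidableEq X2]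
  [Fintype Y1] [DecidableEq Y1] {q1 : X1 → X2 → Y1 → ℝ} {Q1 : X1 → ℝ} {Q2 : X2 → ℝ}
  {P P' : X1 × X2 × Y1 → ℝ}

noncomputable def rateS1 (R2 : ℝ) (P : X1 × X2 × Y1 → ℝ) : ℝ :=
  mutI P (fun z => z.1) (fun z => z.2.2)
    + max (mutI P (fun z => z.2.1) (fun z => (z.1, z.2.2)) - R2) 0

noncomputable def rateS2 (P : X1 × X2 × Y1 → ℝ) : ℝ :=
  mutI P (fun z => z.1) (fun z => (z.2.1, z.2.2))

lemma continuousOn_rateS1 (R2 : ℝ) :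
    ContinuousOn (rateS1 R2) {P : X1 × X2 × Y1 → ℝ | ∀ z, 0 ≤ P z} :=
  (continuousOn_mutI _ _).add (((continuousOn_mutI _ _).sub continuousOn_const).sup
    continuousOn_const)

lemma continuousOn_rateS2 : ContinuousOn rateS2 {P : X1 × X2 × Y1 → ℝ | ∀ z, 0 ≤ P z} :=
  continuousOn_mutI _ _

section JointPMF

variable (hq_pos : ∀ x1 x2 y, 0 < q1 x1 x2 y) (hq_sum : ∀ x1 x2, ∑ y, q1 x1 x2 y = 1)
  (hQ1 : IsPMF Q1) (hQ2 : IsPMF Q2)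
include hq_pos hq_sum hQ1 hQ2

lemma rateS1_jointPMF (R2 : ℝ) : rateS1 R2 (jointPMF q1 Q1 Q2)
    = mutI (jointPMF q1 Q1 Q2) (fun z => z.1) (fun z => z.2.2)
      + max (condMutI (jointPMF q1 Q1 Q2) (fun z => z.2.1) (fun z => z.2.2) (fun z => z.1)
        - R2) 0 := by
  have hP := (isPMF_jointPMF hq_pos hq_sum hQ1 hQ2).1
  rw [rateS1, mutI_prod_eq_add_condMutI hP,
    mutI_comm hP (f := fun z => z.2.1) (g := fun z => z.1),
    mutI_inputs_jointPMF hq_sum hQ1 hQ2, zero_add]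

lemma rateS2_jointPMF : rateS2 (jointPMF q1 Q1 Q2)
    = condMutI (jointPMF q1 Q1 Q2) (fun z => z.1) (fun z => z.2.2) (fun z => z.2.1) := by
  have hP := (isPMF_jointPMF hq_pos hq_sum hQ1 hQ2).1
  rw [rateS2, mutI_prod_eq_add_condMutI hP, mutI_inputs_jointPMF hq_sum hQ1 hQ2,
    zero_add]

end JointPMF

lemma entH_swap_fst_snd :
    entH P (fun z => (z.2.1, z.1, z.2.2)) = entH P (fun z => z) :=
  entH_comp_of_injective (f := fun z => z) (k := fun z : X1 × X2 × Y1 => (z.2.1, z.1, z.2.2))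
    fun s t hst => by
      simp only [Prod.mk.injEq] at hst; exact Prod.ext hst.2.1 (Prod.ext hst.1 hst.2.2)

variable {R2 ρ : ℝ}

lemma f1Fun_ge (hq_pos : ∀ x1 x2 y, 0 < q1 x1 x2 y)
    (hP : P ∈ pmfsWithInputs Y1 Q1 Q2) (hP' : P' ∈ pmfsWithInputs Y1 Q1 Q2)
    (hY : pushf P (fun z => z.2.2) = pushf P' (fun z => z.2.2)) :
    (1 - ρ) * relEnt P (jointPMF q1 Q1 Q2) + ρ * relEnt P' (jointPMF q1 Q1 Q2) - R2
      + ρ * rateS1 R2 P ≤ f1Fun q1 R2 ρ 1 P P' := by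
  have hmax : ∀ a : ℝ, (1 - ρ) * a + ρ * max a 0 ≤ max a ((1 - ρ) * a) := fun a => by
    rcases le_total a 0 with ha | ha
    · simp only [max_eq_right ha, mul_zero, add_zero, le_max_right]
    · rw [max_eq_left ha]; linarith [le_max_left a ((1 - ρ) * a)]
  have h1 := entH_eq_of_pushf_eq (f := fun z : X1 × X2 × Y1 => z.1) (hP.2.1.trans hP'.2.1.symm)
  have h2 := entH_eq_of_pushf_eq (f := fun z : X1 × X2 × Y1 => z.2.1) (hP.2.2.trans hP'.2.2.symm)
  have h3 := entH_eq_of_pushf_eq hY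
  set a := mutI P (fun z => z.2.1) (fun z => (z.1, z.2.2)) - R2
  have key : (1 - ρ) * relEnt P (jointPMF q1 Q1 Q2) + ρ * relEnt P' (jointPMF q1 Q1 Q2) - R2
      + ρ * rateS1 R2 P ≤ gFun q1 ρ 1 P P' - condEnt P (fun z => z.1) (fun z => z.2.2)
        + ρ * mutI P' (fun z => z.1) (fun z => z.2.2) + ((1 - ρ) * a + ρ * max a 0)
        + ρ * (mutI P' (fun z => z.2.1) (fun z => (z.1, z.2.2)) - R2) := by
    rw [gFun, rateS1, sum_mul_log_channel hq_pos hP, sum_mul_log_channel hq_pos hP']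
    simp only [a, condEnt_eq_entH hP.1.1, mutI_eq_entH hP.1.1, mutI_eq_entH hP'.1.1,
      entH_swap_fst_snd, mul_one, ← h1, ← h2, ← h3]
    linarith
  rw [f1Fun]
  simp only [mul_one]
  exact key.trans (add_le_add (add_le_add le_rfl (hmax a)) (le_max_right _ _))

lemma f2Fun_ge (hq_pos : ∀ x1 x2 y, 0 < q1 x1 x2 y)
    (hP : P ∈ pmfsWithInputs Y1 Q1 Q2) (hP' : P' ∈ pmfsWithInputs Y1 Q1 Q2)
    (hXY : pushf P (fun z => (z.2.1, z.2.2)) = pushf P' (fun z => (z.2.1, z.2.2))) :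
    (1 - ρ) * relEnt P (jointPMF q1 Q1 Q2) + ρ * relEnt P' (jointPMF q1 Q1 Q2) - R2
      + ρ * rateS2 P ≤ f2Fun q1 R2 ρ 1 P P' := by
  have h1 := entH_eq_of_pushf_eq (f := fun z : X1 × X2 × Y1 => z.1) (hP.2.1.trans hP'.2.1.symm)
  have h2 := entH_eq_of_pushf_eq (f := fun z : X1 × X2 × Y1 => z.2.1) (hP.2.2.trans hP'.2.2.symm)
  have h23 := entH_eq_of_pushf_eq hXY
  rw [f2Fun, gFun, rateS2, sum_mul_log_channel hq_pos hP, sum_mul_log_channel hq_pos hP']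
  simp only [condEnt_eq_entH hP.1.1, mutI_eq_entH hP.1.1, mutI_eq_entH hP'.1.1,
    entH_swap_fst_snd, mul_one]
  have hid : entH P (fun z => (z.1, z.2.1, z.2.2)) = entH P (fun z => z) := rfl
  rw [hid, ← h1, ← h2, ← h23]
  linarith

lemma coe_le_ER1 (hq_pos : ∀ x1 x2 y, 0 < q1 x1 x2 y) (hq_sum : ∀ x1 x2, ∑ y, q1 x1 x2 y = 1)
    (hQ1 : IsPMF Q1) (hQ2 : IsPMF Q2) {R1 ε : ℝ} (hρ : 0 ≤ ρ)
    (hε : ∀ P ∈ pmfsWithInputs Y1 Q1 Q2, ε ≤ (1 - ρ) * relEnt P (jointPMF q1 Q1 Q2)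
      + ρ * (min (rateS1 R2 P) (rateS2 P) - R1)) :
    (ε : EReal) ≤ ER1 q1 R1 R2 Q1 Q2 ρ 1 := by
  have hS1 : ∀ PP : S1set Y1 Q1 Q2, ε - R2 + ρ * R1 ≤ f1Fun q1 R2 ρ 1 PP.1.1 PP.1.2 := by
    rintro ⟨⟨P, P'⟩, hP, hP', hY, h1, h1', h2, h2'⟩
    have hPK : P ∈ pmfsWithInputs Y1 Q1 Q2 := ⟨hP, h1, h2⟩
    have hP'K : P' ∈ pmfsWithInputs Y1 Q1 Q2 := ⟨hP', h1', h2'⟩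
    have hmin : ρ * (min (rateS1 R2 P) (rateS2 P) - R1) ≤ ρ * (rateS1 R2 P - R1) :=
      mul_le_mul_of_nonneg_left (sub_le_sub_right (min_le_left _ _) R1) hρ
    linarith [hε P hPK, f1Fun_ge (R2 := R2) (ρ := ρ) hq_pos hPK hP'K hY,
      mul_nonneg hρ (relEnt_jointPMF_nonneg hq_pos hq_sum hQ1 hQ2 hP'K)]
  have hS2 : ∀ PP : S2set Y1 Q1 Q2 R2, ε - R2 + ρ * R1 ≤ f2Fun q1 R2 ρ 1 PP.1.1 PP.1.2 := by
    rintro ⟨⟨P, P'⟩, hP, hP', h1, h1', h2, h2', -, hXY⟩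
    have hPK : P ∈ pmfsWithInputs Y1 Q1 Q2 := ⟨hP, h1, h2⟩
    have hP'K : P' ∈ pmfsWithInputs Y1 Q1 Q2 := ⟨hP', h1', h2'⟩
    have hmin : ρ * (min (rateS1 R2 P) (rateS2 P) - R1) ≤ ρ * (rateS2 P - R1) :=
      mul_le_mul_of_nonneg_left (sub_le_sub_right (min_le_right _ _) R1) hρ
    linarith [hε P hPK, f2Fun_ge (R2 := R2) (ρ := ρ) hq_pos hPK hP'K hXY,
      mul_nonneg hρ (relEnt_jointPMF_nonneg hq_pos hq_sum hQ1 hQ2 hP'K)]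
  rw [ER1, show ε = (R2 - ρ * R1) + (ε - R2 + ρ * R1) by ring, EReal.coe_add]
  exact add_le_add le_rfl (le_min (le_iInf fun PP => EReal.coe_le_coe_iff.mpr (hS1 PP))
    (le_iInf fun PP => EReal.coe_le_coe_iff.mpr (hS2 PP)))

end Exponent

theorem stmt18_general {X1 X2 Y1 : Type*} [Fintype X1] [DecidableEq X1] [Fintype X2] [DecidableEq X2]
    [Fintype Y1] [DecidableEq Y1]
    (q1 : X1 → X2 → Y1 → ℝ) (hq_pos : ∀ x1 x2 y, 0 < q1 x1 x2 y)
    (hq_sum : ∀ x1 x2, ∑ y, q1 x1 x2 y = 1)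
    (R1 R2 : ℝ)
    (Q1 : X1 → ℝ) (Q2 : X2 → ℝ) (hQ1 : IsPMF Q1) (hQ2 : IsPMF Q2)
    (Pstar : X1 × X2 × Y1 → ℝ)
    (hPstar : Pstar = fun z => Q1 z.1 * Q2 z.2.1 * q1 z.1 z.2.1 z.2.2)
    (h1 : R1 < mutI Pstar (fun z => z.1) (fun z => z.2.2)
      + max (condMutI Pstar (fun z => z.2.1) (fun z => z.2.2) (fun z => z.1) - R2) 0)
    (h2 : R1 < condMutI Pstar (fun z => z.1) (fun z => z.2.2) (fun z => z.2.1)) :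
    0 < ⨆ ρ : Set.Icc (0 : ℝ) 1, ⨆ lam : Set.Icc (0 : ℝ) 1,
        ER1 q1 R1 R2 Q1 Q2 (ρ : ℝ) (lam : ℝ) := by
  have hPstar' : Pstar = jointPMF q1 Q1 Q2 := hPstar
  subst hPstar'
  have hrate : 0 < min (rateS1 R2 (jointPMF q1 Q1 Q2)) (rateS2 (jointPMF q1 Q1 Q2)) - R1 := by
    rw [rateS1_jointPMF hq_pos hq_sum hQ1 hQ2, rateS2_jointPMF hq_pos hq_sum hQ1 hQ2]
    exact sub_pos.mpr (lt_min h1 h2)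
  obtain ⟨ρ, hρ, ε, hε, hbound⟩ := exists_forall_le_convex_combination isCompact_pmfsWithInputs
    (continuous_relEnt (jointPMF q1 Q1 Q2)).continuousOn
    ((((continuousOn_rateS1 R2).inf continuousOn_rateS2).mono fun P hP => hP.1.1).sub
      continuousOn_const)
    (fun P => relEnt_jointPMF_nonneg hq_pos hq_sum hQ1 hQ2)
    fun P hP => (eq_or_ne P (jointPMF q1 Q1 Q2)).elim (fun h => Or.inr (h ▸ hrate))
      fun h => Or.inl (relEnt_jointPMF_pos hq_pos hq_sum hQ1 hQ2 hP h)
  calc (0 : EReal) < ε := EReal.coe_pos.mpr hε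
    _ ≤ ER1 q1 R1 R2 Q1 Q2 ρ 1 := coe_le_ER1 hq_pos hq_sum hQ1 hQ2 hρ.1 hbound
    _ ≤ _ := le_iSup₂_of_le (f := fun ρ lam : Set.Icc (0 : ℝ) 1 => ER1 q1 R1 R2 Q1 Q2 ρ lam)
      ⟨ρ, hρ⟩ ⟨1, zero_le_one, le_rfl⟩ le_rfl

/-- positivity of the optimized exponent inside the region `𝓡1`. Here
`P*` is the joint pmf `Q1 ⊗ Q2 ⊗ q1`. -/
theorem stmt18 {X1 X2 Y1 : Type*} [Fintype X1] [DecidableEq X1] [Fintype X2] [DecidableEq X2]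
    [Fintype Y1] [DecidableEq Y1]
    (q1 : X1 → X2 → Y1 → ℝ) (hq_pos : ∀ x1 x2 y, 0 < q1 x1 x2 y)
    (hq_sum : ∀ x1 x2, ∑ y, q1 x1 x2 y = 1)
    (R1 R2 : ℝ) (hR1 : 0 ≤ R1) (hR2 : 0 ≤ R2)
    (Q1 : X1 → ℝ) (Q2 : X2 → ℝ) (hQ1 : IsPMF Q1) (hQ2 : IsPMF Q2)
    (Pstar : X1 × X2 × Y1 → ℝ)
    (hPstar : Pstar = fun z => Q1 z.1 * Q2 z.2.1 * q1 z.1 z.2.1 z.2.2)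
    (h1 : R1 < mutI Pstar (fun z => z.1) (fun z => z.2.2)
      + max (condMutI Pstar (fun z => z.2.1) (fun z => z.2.2) (fun z => z.1) - R2) 0)
    (h2 : R1 < condMutI Pstar (fun z => z.1) (fun z => z.2.2) (fun z => z.2.1)) :
    0 < ⨆ ρ : Set.Icc (0 : ℝ) 1, ⨆ lam : Set.Icc (0 : ℝ) 1,
        ER1 q1 R1 R2 Q1 Q2 (ρ : ℝ) (lam : ℝ) :=
  stmt18_general q1 hq_pos hq_sum R1 R2 Q1 Q2 hQ1 hQ2 Pstar hPstar h1 h2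
end
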